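/- arXiv:2006.04517 — 2 statements merged into one kernel-verified Lean document; each statement's English description precedes it below -/
import Mathlib

section
/- The image of every multilinear commutative non-associative polynomial p over F evaluated on 𝔐 is one of: {0}, the line spanned by P + ωR + ω²S, the line spanned by P + ω²R + ωS (where ω ∈ F satisfies ω² + ω + 1 = 0, these cases occurring only if such ω exists), the 2-dimensional space 𝔐₀, or all of 𝔐. In particular, the image is always a vector subspace of 𝔐. -/
/-!
Everything is governed by the coefficient sum `C` of `p`. Setting all variables but one to `1`
evaluates `p` to `C • x`, so for `C ≠ 0` the image is all of `𝔐`. The scalar part and the trace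
are characters of `𝔐`, so `sc (p v) = C * ∏ sc (vᵢ)` and likewise for `tr`: for `C = 0` the image
lies in the plane `𝔐₀`. A multilinear map into a plane either has a one-variable slice of rank
two, and then its image is the whole plane, or any two of its values are dependent, and then its
image is a line or `0`. Such a line is stable under the automorphism `φ`, and an eigenvector of
`φ` in `𝔐₀` is a multiple of `P + ω²R + ωS` with `ω² + ω + 1 = 0`.
-/

/-- The rock-paper-scissors monad algebra: coordinates w.r.t. the basis `{1, P, R, S}`. -/
def RPS (F : Type*) := F × F × F × F

namespace RPS

variable {F : Type*} [Field F]

instance : AddCommGroup (RPS F) := inferInstanceAs (AddCommGroup (F × F × F × F))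
instance : Module F (RPS F) := inferInstanceAs (Module F (F × F × F × F))

/-- Build the element `x0·1 + a·P + b·R + c·S`. -/
def mk4 (x0 a b c : F) : RPS F := (x0, a, b, c)

/-- Scalar part: coefficient of `1`. -/
def sc (x : RPS F) : F := x.1
/-- Coefficient of `P`. -/
def cP (x : RPS F) : F := x.2.1
/-- Coefficient of `R`. -/
def cR (x : RPS F) : F := x.2.2.1
/-- Coefficient of `S`. -/
def cS (x : RPS F) : F := x.2.2.2

instance : One (RPS F) := ⟨mk4 1 0 0 0⟩

/-- The commutative non-associative multiplication determined by: `1` is the unit,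
`P, R, S` are idempotent, and `P·R = R·P = P`, `P·S = S·P = S`, `S·R = R·S = R`. -/
instance : Mul (RPS F) :=
  ⟨fun x y => mk4 (sc x * sc y)
    (sc x * cP y + sc y * cP x + cP x * cP y + cP x * cR y + cR x * cP y)
    (sc x * cR y + sc y * cR x + cR x * cR y + cR x * cS y + cS x * cR y)
    (sc x * cS y + sc y * cS x + cS x * cS y + cP x * cS y + cS x * cP y)⟩

/-- The basis element `P`. -/
def eP : RPS F := mk4 0 1 0 0
/-- The basis element `R`. -/
def eR : RPS F := mk4 0 0 1 0
/-- The basis element `S`. -/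
def eS : RPS F := mk4 0 0 0 1

/-- The trace homomorphism `tr(x0·1 + aP + bR + cS) = x0 + a + b + c`. -/
def tr (x : RPS F) : F := sc x + cP x + cR x + cS x

/-- The linear map `φ` with `1 ↦ 1`, `P ↦ R`, `R ↦ S`, `S ↦ P`. -/
def phi (x : RPS F) : RPS F := mk4 (sc x) (cS x) (cP x) (cR x)

end RPS

/-- The multiset of occurrences of variables in a non-associative monomial. -/
def occurs {α : Type*} : FreeMagma α → Multiset α
  | .of a => {a}
  | .mul x y => occurs x + occurs y

/-- A (non-associative) multilinear polynomial in `m` variables over `F`, encoded as a finitely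
supported linear combination of non-associative monomials (elements of the free magma), is
multilinear if every monomial contains each of the `m` variables exactly once. -/
def IsMultilinear {F : Type*} [Field F] {m : ℕ} (p : FreeMagma (Fin m) →₀ F) : Prop :=
  ∀ w ∈ p.support, occurs w = (Finset.univ : Finset (Fin m)).val

/-- Evaluation of a non-associative polynomial on an `F`-algebra `A`. -/
def evalPoly {F : Type*} [Field F] {A : Type*} [AddCommGroup A] [Module F A] [Mul A]
    {m : ℕ} (p : FreeMagma (Fin m) →₀ F) (v : Fin m → A) : A :=
  p.sum fun w c => c • (FreeMagma.lift v : FreeMagma (Fin m) →ₙ* A) w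

open Function Module Finset

theorem occurs_of {ι : Type*} (a : ι) : occurs (FreeMagma.of a) = {a} := rfl

theorem occurs_mul {ι : Type*} (w₁ w₂ : FreeMagma ι) :
    occurs (w₁ * w₂) = occurs w₁ + occurs w₂ := rfl

namespace FreeMagma

variable {ι A : Type*}

theorem nonempty_of_finsupp_ne_zero {R : Type*} [Zero R] {p : FreeMagma ι →₀ R} (hp : p ≠ 0) :
    Nonempty ι := by
  obtain ⟨w, -⟩ := Finsupp.support_nonempty_iff.mpr hp
  induction w with
  | ih1 a => exact ⟨a⟩
  | ih2 w₁ w₂ h₁ => exact h₁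

theorem lift_eq_prod_occurs [CommMonoid A] (u : ι → A) (w : FreeMagma ι) :
    lift u w = ((occurs w).map u).prod := by
  induction w with
  | ih1 a => simp [occurs_of]
  | ih2 w₁ w₂ h₁ h₂ => rw [map_mul, h₁, h₂, occurs_mul, Multiset.map_add, Multiset.prod_add]

theorem lift_one [MulOneClass A] (w : FreeMagma ι) : lift (1 : ι → A) w = 1 := by
  induction w with
  | ih1 a => rfl
  | ih2 w₁ w₂ h₁ h₂ => rw [map_mul, h₁, h₂, one_mul]

variable [DecidableEq ι]

theorem lift_update_of_notMem_occurs [Mul A] (v : ι → A) {i : ι} (x : A) {w : FreeMagma ι}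
    (h : i ∉ occurs w) : lift (update v i x) w = lift v w := by
  induction w with
  | ih1 a => exact update_of_ne (Ne.symm (by simpa [occurs_of] using h)) x v
  | ih2 w₁ w₂ h₁ h₂ =>
    simp only [occurs_mul, Multiset.mem_add, not_or] at h
    rw [map_mul, map_mul, h₁ h.1, h₂ h.2]

theorem count_occurs_mul_eq_one {i : ι} {w₁ w₂ : FreeMagma ι}
    (h : (occurs (w₁ * w₂)).count i = 1) :
    (i ∉ occurs w₁ ∧ (occurs w₂).count i = 1) ∨ ((occurs w₁).count i = 1 ∧ i ∉ occurs w₂) := by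
  rw [occurs_mul, Multiset.count_add] at h
  simp only [← Multiset.count_eq_zero]
  omega

theorem eq_of_count_occurs_of_eq_one {i a : ι} (h : (occurs (of a)).count i = 1) : a = i := by
  simpa [occurs_of, Multiset.count_singleton, eq_comm] using h

/-- In a monomial containing the variable `i` exactly once, every other factor is a constant
multiplier on one side of it. -/
theorem exists_linearMap_lift_update {R : Type*} [CommSemiring R] [NonUnitalNonAssocSemiring A]
    [Module R A] [IsScalarTower R A A] [SMulCommClass R A A] (v : ι → A) {i : ι}
    {w : FreeMagma ι} (h : (occurs w).count i = 1) :
    ∃ L : A →ₗ[R] A, ∀ x, lift (update v i x) w = L x := by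
  induction w with
  | ih1 a =>
    obtain rfl := eq_of_count_occurs_of_eq_one h
    exact ⟨LinearMap.id, fun x => by simp⟩
  | ih2 w₁ w₂ h₁ h₂ =>
    rcases count_occurs_mul_eq_one h with ⟨hi₁, hw₂⟩ | ⟨hw₁, hi₂⟩
    · obtain ⟨L, hL⟩ := h₂ hw₂
      refine ⟨LinearMap.mulLeft R (lift v w₁) ∘ₗ L, fun x => ?_⟩
      rw [map_mul, lift_update_of_notMem_occurs v x hi₁, hL]
      rfl
    · obtain ⟨L, hL⟩ := h₁ hw₁
      refine ⟨LinearMap.mulRight R (lift v w₂) ∘ₗ L, fun x => ?_⟩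
      rw [map_mul, lift_update_of_notMem_occurs v x hi₂, hL]
      rfl

theorem lift_update_one [MulOneClass A] {i : ι} (x : A) {w : FreeMagma ι}
    (h : (occurs w).count i = 1) : lift (update 1 i x) w = x := by
  induction w with
  | ih1 a =>
    obtain rfl := eq_of_count_occurs_of_eq_one h
    simp
  | ih2 w₁ w₂ h₁ h₂ =>
    rcases count_occurs_mul_eq_one h with ⟨hi₁, hw₂⟩ | ⟨hw₁, hi₂⟩
    · rw [map_mul, lift_update_of_notMem_occurs 1 x hi₁, lift_one, h₂ hw₂, one_mul]
    · rw [map_mul, lift_update_of_notMem_occurs 1 x hi₂, lift_one, h₁ hw₁, mul_one]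

end FreeMagma

section evalPoly

variable {F : Type*} [Field F] {m : ℕ} {p : FreeMagma (Fin m) →₀ F}

theorem evalPoly_zero {A : Type*} [AddCommGroup A] [Module F A] [Mul A] (v : Fin m → A) :
    evalPoly (0 : FreeMagma (Fin m) →₀ F) v = 0 :=
  Finsupp.sum_zero_index

theorem NonUnitalAlgHom.map_evalPoly {A B : Type*} [NonUnitalNonAssocRing A] [Module F A]
    [NonUnitalNonAssocRing B] [Module F B] (f : A →ₙₐ[F] B) (v : Fin m → A) :
    f (evalPoly p v) = evalPoly p (f ∘ v) := by
  have hlift : ∀ w, f (FreeMagma.lift v w) = FreeMagma.lift (f ∘ v) w := fun w => by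
    induction w with
    | ih1 a => rfl
    | ih2 w₁ w₂ h₁ h₂ => rw [map_mul, map_mul, map_mul, h₁, h₂]
  simp only [evalPoly, map_finsuppSum, map_smul, hlift]

namespace IsMultilinear

variable (hp : IsMultilinear p)
include hp

theorem count_occurs [DecidableEq (Fin m)] {w : FreeMagma (Fin m)} (hw : w ∈ p.support)
    (i : Fin m) : (occurs w).count i = 1 := by
  rw [hp w hw]
  exact Multiset.count_univ i

def toMultilinearMap (A : Type*) [NonUnitalNonAssocRing A] [Module F A] [IsScalarTower F A A]
    [SMulCommClass F A A] : MultilinearMap F (fun _ : Fin m => A) A where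
  toFun := evalPoly p
  map_update_add' v i x y := by
    simp only [evalPoly, ← Finsupp.sum_add]
    refine Finsupp.sum_congr fun w hw => ?_
    obtain ⟨L, hL⟩ := FreeMagma.exists_linearMap_lift_update (R := F) v (hp.count_occurs hw i)
    rw [hL, hL, hL, map_add, smul_add]
  map_update_smul' v i c x := by
    simp only [evalPoly, Finsupp.smul_sum]
    refine Finsupp.sum_congr fun w hw => ?_
    obtain ⟨L, hL⟩ := FreeMagma.exists_linearMap_lift_update (R := F) v (hp.count_occurs hw i)
    rw [hL, hL, map_smul, smul_comm]

theorem evalPoly_update_one {A : Type*} [NonAssocRing A] [Module F A] (i : Fin m) (x : A) :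
    evalPoly p (update 1 i x) = (p.sum fun _ c => c) • x := by
  rw [evalPoly, Finsupp.sum, Finsupp.sum, Finset.sum_smul]
  refine Finset.sum_congr rfl fun w hw => ?_
  rw [FreeMagma.lift_update_one x (hp.count_occurs hw i)]

theorem evalPoly_eq_mul_prod (u : Fin m → F) :
    evalPoly p u = (p.sum fun _ c => c) * ∏ i, u i := by
  rw [evalPoly, Finsupp.sum_mul]
  refine Finsupp.sum_congr fun w hw => ?_
  rw [FreeMagma.lift_eq_prod_occurs, hp w hw, smul_eq_mul]
  rfl

theorem range_evalPoly_eq_univ (hC : (p.sum fun _ c => c) ≠ 0) {A : Type*} [NonAssocRing A]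
    [Module F A] : Set.range (evalPoly p : (Fin m → A) → A) = Set.univ := by
  obtain ⟨i⟩ := FreeMagma.nonempty_of_finsupp_ne_zero (p := p) (by rintro rfl; exact hC rfl)
  refine Set.eq_univ_of_forall fun x => ⟨update 1 i ((p.sum fun _ c => c)⁻¹ • x), ?_⟩
  rw [hp.evalPoly_update_one, smul_smul, mul_inv_cancel₀ hC, one_smul]

end IsMultilinear

end evalPoly

theorem LinearIndependent.eq_zero_of_not_linearIndependent_pairs {K V : Type*} [Field K]
    [AddCommGroup V] [Module K V] {x y z : V} (hxy : LinearIndependent K ![x, y])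
    (hxz : ¬LinearIndependent K ![x, z]) (hzy : ¬LinearIndependent K ![z, y]) : z = 0 := by
  by_contra hz
  rw [LinearIndependent.pair_symm_iff, LinearIndependent.pair_iff' hz] at hxz
  rw [LinearIndependent.pair_iff' hz] at hzy
  push Not at hxz hzy
  obtain ⟨r, rfl⟩ := hxz
  obtain ⟨s, rfl⟩ := hzy
  have hrs := LinearIndependent.pair_iff.mp hxy s (-r) <| by
    rw [smul_smul, smul_smul, ← add_smul, mul_comm, neg_mul, add_neg_cancel, zero_smul]
  exact hxy.ne_zero 0 (by simp [neg_eq_zero.mp hrs.2])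

namespace MultilinearMap

variable {K ι W : Type*} {M : ι → Type*} [Field K] [∀ i, AddCommGroup (M i)] [∀ i, Module K (M i)]
  [AddCommGroup W] [Module K W] [DecidableEq ι]

/-- If `f(a)` and `f(b)` were independent with `a, b` differing in as few coordinates as
possible, then for a coordinate `k` where they differ, `f(a[k := b k])` and `f(b[k := a k])` would
both vanish, so `f(a[k := a k + b k]) = f(a)` and `f(b[k := a k + b k]) = f(b)` would be
independent at closer points. -/
theorem not_linearIndependent_pair_of_slices [Fintype ι] (f : MultilinearMap K M W)
    (hf : ∀ v i x y, ¬LinearIndependent K ![f (update v i x), f (update v i y)]) (a b : ∀ i, M i) :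
    ¬LinearIndependent K ![f a, f b] := by
  classical
  induction h : #{i | a i ≠ b i} using Nat.strong_induction_on generalizing a b with
  | _ n ih =>
  obtain hab | ⟨k, hk⟩ := Finset.eq_empty_or_nonempty {i | a i ≠ b i}
  · obtain rfl : a = b :=
      funext fun i => by simpa using Finset.filter_eq_empty_iff.mp hab (mem_univ i)
    exact fun hli => by simpa using hli.injective.ne (show (0 : Fin 2) ≠ 1 by decide)
  have hcloser : ∀ z, #{i | update a k z i ≠ update b k z i} < n := fun z => by
    rw [← h]
    refine Finset.card_lt_card ⟨fun i hi => ?_, fun hsub => ?_⟩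
    · simp only [Finset.mem_filter, mem_univ, true_and] at hi ⊢
      by_cases hik : i = k
      · subst hik; simp at hi
      · simpa [hik] using hi
    · simpa using hsub hk
  have ih' : ∀ z, ¬LinearIndependent K ![f (update a k z), f (update b k z)] :=
    fun z => ih _ (hcloser z) _ _ rfl
  intro hli
  have hc : f (update a k (b k)) = 0 :=
    hli.eq_zero_of_not_linearIndependent_pairs (by simpa using hf a k (a k) (b k))
      (by simpa using ih' (b k))
  have hc' : f (update b k (a k)) = 0 :=
    hli.eq_zero_of_not_linearIndependent_pairs (by simpa using ih' (a k))
      (by simpa using hf b k (a k) (b k))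
  apply ih' (a k + b k)
  simpa [f.map_update_add, hc, hc'] using hli

theorem range_eq_span_singleton_of_slices [Nonempty ι] [Fintype ι] (f : MultilinearMap K M W)
    (hf : ∀ v i x y, ¬LinearIndependent K ![f (update v i x), f (update v i y)])
    {a : ∀ i, M i} (ha : f a ≠ 0) : Set.range f = Submodule.span K {f a} := by
  ext y
  simp only [Set.mem_range, SetLike.mem_coe, Submodule.mem_span_singleton]
  constructor
  · rintro ⟨b, rfl⟩
    simpa [LinearIndependent.pair_iff' ha] using f.not_linearIndependent_pair_of_slices hf a b
  · rintro ⟨c, rfl⟩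
    obtain ⟨i⟩ := ‹Nonempty ι›
    exact ⟨update a i (c • a i), by simp [f.map_update_smul]⟩

theorem range_eq_of_linearIndependent_slice (f : MultilinearMap K M W) {U : Submodule K W}
    [FiniteDimensional K U] (hU : finrank K U ≤ 2) (hfU : ∀ v, f v ∈ U) {v : ∀ i, M i} {i : ι}
    {x y : M i} (hli : LinearIndependent K ![f (update v i x), f (update v i y)]) :
    Set.range f = U := by
  let L := f.toLinearMap v i
  have hLU : LinearMap.range L ≤ U := by
    rintro _ ⟨z, rfl⟩
    exact hfU _
  have := Submodule.finiteDimensional_of_le hLU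
  have hL : LinearMap.range L = U := by
    refine Submodule.eq_of_le_of_finrank_le hLU (hU.trans ?_)
    calc 2 = finrank K (Submodule.span K (Set.range ![f (update v i x), f (update v i y)])) := by
          rw [finrank_span_eq_card hli, Fintype.card_fin]
      _ ≤ finrank K (LinearMap.range L) := by
          refine Submodule.finrank_mono (Submodule.span_le.mpr ?_)
          rintro _ ⟨j, rfl⟩
          fin_cases j
          exacts [⟨x, rfl⟩, ⟨y, rfl⟩]
  refine (Set.range_subset_iff.mpr hfU).antisymm ?_
  rw [← hL]
  rintro _ ⟨z, rfl⟩
  exact ⟨_, rfl⟩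

end MultilinearMap

namespace RPS

variable {F : Type*}

@[ext]
theorem ext {x y : RPS F} (h0 : sc x = sc y) (h1 : cP x = cP y) (h2 : cR x = cR y)
    (h3 : cS x = cS y) : x = y :=
  Prod.ext h0 (Prod.ext h1 (Prod.ext h2 h3))

section coordinates

variable (x y : RPS F) (c : F) (x0 a b d : F)

@[simp] theorem sc_mk4 : sc (mk4 x0 a b d) = x0 := rfl
@[simp] theorem cP_mk4 : cP (mk4 x0 a b d) = a := rfl
@[simp] theorem cR_mk4 : cR (mk4 x0 a b d) = b := rfl
@[simp] theorem cS_mk4 : cS (mk4 x0 a b d) = d := rfl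

@[simp] theorem sc_phi : sc (phi x) = sc x := rfl
@[simp] theorem cP_phi : cP (phi x) = cS x := rfl
@[simp] theorem cR_phi : cR (phi x) = cP x := rfl
@[simp] theorem cS_phi : cS (phi x) = cR x := rfl

variable [Field F]

@[simp] theorem sc_zero : sc (0 : RPS F) = 0 := rfl
@[simp] theorem cP_zero : cP (0 : RPS F) = 0 := rfl
@[simp] theorem cR_zero : cR (0 : RPS F) = 0 := rfl
@[simp] theorem cS_zero : cS (0 : RPS F) = 0 := rfl

@[simp] theorem sc_one : sc (1 : RPS F) = 1 := rfl
@[simp] theorem cP_one : cP (1 : RPS F) = 0 := rfl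
@[simp] theorem cR_one : cR (1 : RPS F) = 0 := rfl
@[simp] theorem cS_one : cS (1 : RPS F) = 0 := rfl

@[simp] theorem sc_add : sc (x + y) = sc x + sc y := rfl
@[simp] theorem cP_add : cP (x + y) = cP x + cP y := rfl
@[simp] theorem cR_add : cR (x + y) = cR x + cR y := rfl
@[simp] theorem cS_add : cS (x + y) = cS x + cS y := rfl

@[simp] theorem sc_smul : sc (c • x) = c * sc x := rfl
@[simp] theorem cP_smul : cP (c • x) = c * cP x := rfl
@[simp] theorem cR_smul : cR (c • x) = c * cR x := rfl
@[simp] theorem cS_smul : cS (c • x) = c * cS x := rfl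

@[simp] theorem sc_mul : sc (x * y) = sc x * sc y := rfl
@[simp] theorem cP_mul :
    cP (x * y) = sc x * cP y + sc y * cP x + cP x * cP y + cP x * cR y + cR x * cP y := rfl
@[simp] theorem cR_mul :
    cR (x * y) = sc x * cR y + sc y * cR x + cR x * cR y + cR x * cS y + cS x * cR y := rfl
@[simp] theorem cS_mul :
    cS (x * y) = sc x * cS y + sc y * cS x + cS x * cS y + cP x * cS y + cS x * cP y := rfl

end coordinates

end RPS

/- Only scoped: as a global instance, `NonAssocRing (RPS F)` would change the elaborated form of
`0` and of the additive structure in every later statement about `RPS F`. -/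
namespace RPSAlgebra

variable {F : Type*} [Field F]

scoped instance : NonAssocRing (RPS F) where
  left_distrib _ _ _ := by ext <;> simp <;> ring
  right_distrib _ _ _ := by ext <;> simp <;> ring
  zero_mul _ := by ext <;> simp
  mul_zero _ := by ext <;> simp
  one_mul _ := by ext <;> simp
  mul_one _ := by ext <;> simp

end RPSAlgebra

section

open scoped RPSAlgebra

namespace RPS

variable {F : Type*} [Field F]

instance : IsScalarTower F (RPS F) (RPS F) :=
  ⟨fun _ _ _ => by ext <;> simp <;> ring⟩

instance : SMulCommClass F (RPS F) (RPS F) :=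
  ⟨fun _ _ _ => by ext <;> simp <;> ring⟩

instance : FiniteDimensional F (RPS F) :=
  inferInstanceAs (FiniteDimensional F (F × F × F × F))

def scAlgHom : RPS F →ₙₐ[F] F where
  toFun := sc
  map_smul' _ _ := rfl
  map_zero' := rfl
  map_add' _ _ := rfl
  map_mul' _ _ := rfl

def trAlgHom : RPS F →ₙₐ[F] F where
  toFun := tr
  map_smul' _ _ := by simp [tr]; ring
  map_zero' := by simp [tr]
  map_add' _ _ := by simp [tr]; ring
  map_mul' _ _ := by simp [tr]; ring

def phiAlgHom : RPS F →ₙₐ[F] RPS F where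
  toFun := phi
  map_smul' _ _ := rfl
  map_zero' := rfl
  map_add' _ _ := rfl
  map_mul' _ _ := by ext <;> simp <;> ring

def M₀ : Submodule F (RPS F) where
  carrier := {x | tr x = 0 ∧ sc x = 0}
  add_mem' := by
    rintro x y ⟨hx, hx'⟩ ⟨hy, hy'⟩
    refine ⟨?_, by simp [hx', hy']⟩
    simp only [tr, sc_add, cP_add, cR_add, cS_add] at *
    linear_combination hx + hy
  zero_mem' := by simp [tr]
  smul_mem' := by
    rintro c x ⟨hx, hx'⟩
    refine ⟨?_, by simp [hx']⟩
    simp only [tr, sc_smul, cP_smul, cR_smul, cS_smul] at *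
    linear_combination c * hx

theorem finrank_M₀_le : Module.finrank F (M₀ : Submodule F (RPS F)) ≤ 2 := by
  have hle : M₀ ≤ Submodule.span F (Set.range ![mk4 0 1 0 (-1), mk4 0 0 1 (-1)]) := by
    rintro x ⟨hx, hx'⟩
    rw [Matrix.range_cons_cons_empty, Submodule.mem_span_pair]
    refine ⟨cP x, cR x, ?_⟩
    simp only [tr] at hx
    ext <;> simp [hx']; linear_combination -hx + hx'
  calc Module.finrank F M₀ ≤ _ := Submodule.finrank_mono hle
    _ ≤ 2 := finrank_range_le_card _

theorem exists_omega_of_phi_mem_span {x : RPS F} (hx : x ∈ M₀) (hx0 : x ≠ 0)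
    (hφ : phi x ∈ Submodule.span F {x}) :
    ∃ ω : F, ω ^ 2 + ω + 1 = 0 ∧
      Submodule.span F {x} = Submodule.span F {mk4 0 1 (ω ^ 2) ω} := by
  obtain ⟨ω, hω⟩ := Submodule.mem_span_singleton.mp hφ
  obtain ⟨htr, hsc⟩ := hx
  simp only [tr] at htr
  have hS : cS x = ω * cP x := by simpa using (congrArg cP hω).symm
  have hR : cR x = ω * cS x := by simpa using (congrArg cS hω).symm
  have hP0 : cP x ≠ 0 := fun h => hx0 <| by
    have h' : cS x = 0 := by rw [hS, h, mul_zero]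
    ext <;> simp [hsc, h, h', hR]
  have hx_eq : x = cP x • mk4 0 1 (ω ^ 2) ω := by
    ext <;> simp [hsc]
    · linear_combination hR + ω * hS
    · linear_combination hS
  refine ⟨ω, mul_left_cancel₀ hP0 ?_, ?_⟩
  · linear_combination htr - hsc - hR - (1 + ω) * hS
  · rw [hx_eq, Submodule.span_singleton_smul_eq (IsUnit.mk0 _ hP0)]

variable {m : ℕ} {p : FreeMagma (Fin m) →₀ F}

theorem evalPoly_mem_M₀ (hp : IsMultilinear p) (hC : (p.sum fun _ c => c) = 0)
    (v : Fin m → RPS F) : evalPoly p v ∈ M₀ := by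
  constructor
  · change trAlgHom (evalPoly p v) = 0
    rw [NonUnitalAlgHom.map_evalPoly, hp.evalPoly_eq_mul_prod, hC, zero_mul]
  · change scAlgHom (evalPoly p v) = 0
    rw [NonUnitalAlgHom.map_evalPoly, hp.evalPoly_eq_mul_prod, hC, zero_mul]

end RPS

end

open RPS in
/-- Main theorem: the image of any multilinear non-associative polynomial on `𝔐` is
`{0}`, the line `⟨P + ωR + ω²S⟩`, the line `⟨P + ω²R + ωS⟩` (with `ω² + ω + 1 = 0`,
possible only if such `ω` exists in `F`), the plane `𝔐₀`, or all of `𝔐`.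
In particular it is always a vector subspace. -/
theorem multilinear_image_classification {F : Type*} [Field F] {m : ℕ}
    (p : FreeMagma (Fin m) →₀ F) (hml : IsMultilinear p) :
    Set.range (fun v : Fin m → RPS F => evalPoly p v) = {0} ∨
    (∃ ω : F, ω ^ 2 + ω + 1 = 0 ∧
      Set.range (fun v : Fin m → RPS F => evalPoly p v) =
        (Submodule.span F {mk4 0 1 ω (ω ^ 2)} : Submodule F (RPS F))) ∨
    (∃ ω : F, ω ^ 2 + ω + 1 = 0 ∧
      Set.range (fun v : Fin m → RPS F => evalPoly p v) =
        (Submodule.span F {mk4 0 1 (ω ^ 2) ω} : Submodule F (RPS F))) ∨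
    Set.range (fun v : Fin m → RPS F => evalPoly p v) = {x | tr x = 0 ∧ sc x = 0} ∨
    Set.range (fun v : Fin m → RPS F => evalPoly p v) = Set.univ := by
  open scoped RPSAlgebra in
  set f := hml.toMultilinearMap (RPS F)
  rw [show (fun v : Fin m → RPS F => evalPoly p v) = f from rfl]
  by_cases hzero : ∀ v, f v = 0
  · left
    rw [show ⇑f = fun _ => 0 from funext hzero, Set.range_const]
  obtain ⟨v₀, hv₀⟩ := not_forall.mp hzero
  rcases ne_or_eq (p.sum fun _ c => c) 0 with hC | hC
  · exact Or.inr <| Or.inr <| Or.inr <| Or.inr <| hml.range_evalPoly_eq_univ hC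
  have hM₀ := evalPoly_mem_M₀ hml hC
  by_cases hslice : ∃ v i x y, LinearIndependent F ![f (update v i x), f (update v i y)]
  · obtain ⟨v, i, x, y, hli⟩ := hslice
    exact Or.inr <| Or.inr <| Or.inr <| Or.inl <|
      f.range_eq_of_linearIndependent_slice finrank_M₀_le hM₀ hli
  push Not at hslice
  have : Nonempty (Fin m) := FreeMagma.nonempty_of_finsupp_ne_zero (p := p) <| by
    rintro rfl
    exact hv₀ (evalPoly_zero (F := F) v₀)
  have hline := f.range_eq_span_singleton_of_slices hslice hv₀
  have hφ : phi (f v₀) ∈ Submodule.span F {f v₀} := by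
    rw [← SetLike.mem_coe, ← hline]
    exact ⟨phi ∘ v₀, (phiAlgHom.map_evalPoly v₀).symm⟩
  obtain ⟨ω, hω, hspan⟩ := exists_omega_of_phi_mem_span (hM₀ v₀) hv₀ hφ
  exact Or.inr <| Or.inr <| Or.inl ⟨ω, hω, hline.trans (congrArg _ hspan)⟩
end

section
/- Suppose char F ≠ 3 and ω ∈ F satisfies ω² + ω + 1 = 0. If p(x₁,…,xₘ) is a multilinear commutative non-associative polynomial over F, then the image of p evaluated on 𝔐₀ is either {0} or all of 𝔐₀. -/
/-!
A monomial whose even-depth leaves form the set `T` sends `v i = a i • U + b i • V` to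
`a^T b^(univ \ T) • U + b^T a^(univ \ T) • V`, and `#T - #(univ \ T) ≡ 1 (mod 3)`. Hence `p`
acts through coefficients `c T` (summed over the monomials with that `T`), and `c T` and
`c (univ \ T)` are never both nonzero.

If `c ≠ 0`, put `v i = x i • U + V` for `i ≠ j`: then `p` is a linear map of `v j` whose
determinant is a polynomial in `x` of degree at most `2` in each variable. Suppose it vanished
for every `j`. Write `q = ∑ c T x^T = B + x j * A` and `q* = ∑ c T x^(univ \ T) = B* + x j * A*`
with `A, B, A*, B*` free of `x j`; the determinant is `A B* - B A*`, so `A q* = A* q` and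
`B q* = B* q`. After cancelling `gcd(q, q*)`, the cofactor of `q` divides `A` and `B`, so it
does not involve `x j`. Hence `q*` is a scalar multiple of `q`, which makes `c (univ \ T)`
nonzero together with `c T`. Finally, as `0, 1, ω` are distinct, a nonzero polynomial of
partial degrees `≤ 2` does not vanish on all of `F^m`.
-/

/-- The 2-dimensional "good basis" algebra `𝔐₀` with basis `U, V` satisfying
`U² = V`, `V² = U`, `U·V = V·U = 0`; coordinates w.r.t. the basis `{U, V}`. -/
def GoodAlg (F : Type*) := F × F

namespace GoodAlg

variable {F : Type*} [Field F]

instance : AddCommGroup (GoodAlg F) := inferInstanceAs (AddCommGroup (F × F))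
instance : Module F (GoodAlg F) := inferInstanceAs (Module F (F × F))

def mk2 (a b : F) : GoodAlg F := (a, b)

/-- Coefficient of `U`. -/
def uc (x : GoodAlg F) : F := x.1
/-- Coefficient of `V`. -/
def vc (x : GoodAlg F) : F := x.2

/-- Multiplication: `(aU + bV)·(cU + dV) = bd·U + ac·V`, i.e. `U² = V`, `V² = U`, `UV = VU = 0`. -/
instance : Mul (GoodAlg F) := ⟨fun x y => mk2 (vc x * vc y) (uc x * uc y)⟩

/-- The basis element `U`. -/
def U : GoodAlg F := mk2 1 0
/-- The basis element `V`. -/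
def V : GoodAlg F := mk2 0 1

end GoodAlg

open Finset

namespace GoodAlg

@[simp] lemma uc_mk2 {F : Type*} (a b : F) : uc (mk2 a b) = a := rfl

@[simp] lemma vc_mk2 {F : Type*} (a b : F) : vc (mk2 a b) = b := rfl

lemma ext {F : Type*} {x y : GoodAlg F} (hu : uc x = uc y) (hv : vc x = vc y) : x = y :=
  Prod.ext hu hv

variable {F : Type*} [Field F]

@[simp] lemma mk2_zero : mk2 (0 : F) 0 = 0 := rfl

lemma uc_mul (x y : GoodAlg F) : uc (x * y) = vc x * vc y := rfl

lemma vc_mul (x y : GoodAlg F) : vc (x * y) = uc x * uc y := rfl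

lemma uc_smul (c : F) (x : GoodAlg F) : uc (c • x) = c * uc x := rfl

lemma vc_smul (c : F) (x : GoodAlg F) : vc (c • x) = c * vc x := rfl

lemma uc_sum {ι : Type*} (s : Finset ι) (f : ι → GoodAlg F) :
    uc (∑ i ∈ s, f i) = ∑ i ∈ s, uc (f i) :=
  Prod.fst_sum

lemma vc_sum {ι : Type*} (s : Finset ι) (f : ι → GoodAlg F) :
    vc (∑ i ∈ s, f i) = ∑ i ∈ s, vc (f i) :=
  Prod.snd_sum

end GoodAlg

/-- The leaves of a monomial at even depth and at odd depth, the root having depth `0`. -/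
def leavesByParity {α : Type*} : FreeMagma α → Multiset α × Multiset α
  | .of a => ({a}, 0)
  | .mul x y => ((leavesByParity x).2 + (leavesByParity y).2,
      (leavesByParity x).1 + (leavesByParity y).1)

section LeavesByParity

open GoodAlg

variable {α : Type*}

@[simp] lemma leavesByParity_of (a : α) : leavesByParity (FreeMagma.of a) = ({a}, 0) := rfl

@[simp] lemma leavesByParity_mul (x y : FreeMagma α) :
    leavesByParity (x * y) = ((leavesByParity x).2 + (leavesByParity y).2,
      (leavesByParity x).1 + (leavesByParity y).1) := rfl

lemma fst_leavesByParity_add_snd (w : FreeMagma α) :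
    (leavesByParity w).1 + (leavesByParity w).2 = occurs w := by
  induction w using FreeMagma.recOnMul with
  | ih1 a => simp [occurs]
  | ih2 x y hx hy =>
    dsimp only [leavesByParity_mul]
    rw [show occurs (x * y) = occurs x + occurs y from rfl, ← hx, ← hy]
    abel

/-- `#even - #odd` of a product is minus the sum of those of its factors, so it stays `1`
modulo `3`. -/
lemma card_fst_leavesByParity (w : FreeMagma α) :
    (Multiset.card (leavesByParity w).1 : ZMod 3) = Multiset.card (leavesByParity w).2 + 1 := by
  induction w using FreeMagma.recOnMul with
  | ih1 a => simp
  | ih2 x y hx hy =>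
    simp only [leavesByParity_mul, Multiset.card_add, Nat.cast_add, hx, hy]
    have h3 : (3 : ZMod 3) = 0 := rfl
    linear_combination -h3

lemma lift_eq_mk2 {F : Type*} [Field F] (v : α → GoodAlg F) (w : FreeMagma α) :
    FreeMagma.lift v w =
      mk2 (((leavesByParity w).1.map (uc ∘ v)).prod * ((leavesByParity w).2.map (vc ∘ v)).prod)
        (((leavesByParity w).1.map (vc ∘ v)).prod *
          ((leavesByParity w).2.map (uc ∘ v)).prod) := by
  induction w using FreeMagma.recOnMul with
  | ih1 a => exact GoodAlg.ext (by simp) (by simp)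
  | ih2 x y hx hy =>
    rw [map_mul, hx, hy]
    refine GoodAlg.ext ?_ ?_
    · simp only [uc_mul, uc_mk2, vc_mk2, leavesByParity_mul, Multiset.map_add, Multiset.prod_add]
      ring
    · simp only [vc_mul, uc_mk2, vc_mk2, leavesByParity_mul, Multiset.map_add, Multiset.prod_add]
      ring

end LeavesByParity

section EvenLeaves

open GoodAlg

variable {α : Type*} [Fintype α] [DecidableEq α]

def evenLeaves (w : FreeMagma α) : Finset α := (leavesByParity w).1.toFinset

variable {w : FreeMagma α}

lemma val_evenLeaves (hw : occurs w = univ.val) : (evenLeaves w).val = (leavesByParity w).1 := by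
  refine Multiset.dedup_eq_self.mpr (Multiset.nodup_of_le ?_ univ.nodup)
  rw [← hw, ← fst_leavesByParity_add_snd]
  exact Multiset.le_add_right _ _

lemma val_sdiff_evenLeaves (hw : occurs w = univ.val) :
    (univ \ evenLeaves w).val = (leavesByParity w).2 := by
  rw [sdiff_val, val_evenLeaves hw, ← hw, ← fst_leavesByParity_add_snd, add_tsub_cancel_left]

lemma card_evenLeaves (hw : occurs w = univ.val) :
    (#(evenLeaves w) : ZMod 3) = #(univ \ evenLeaves w) + 1 := by
  rw [card_def, card_def, val_evenLeaves hw, val_sdiff_evenLeaves hw]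
  exact card_fst_leavesByParity w

lemma evenLeaves_ne_sdiff {w₁ w₂ : FreeMagma α} (hw₁ : occurs w₁ = univ.val)
    (hw₂ : occurs w₂ = univ.val) : evenLeaves w₁ ≠ univ \ evenLeaves w₂ := by
  intro h
  have h₁ := card_evenLeaves hw₁
  have h₂ := card_evenLeaves hw₂
  rw [h, Finset.sdiff_sdiff_eq_self (subset_univ _)] at h₁
  have : (2 : ZMod 3) = 0 := by linear_combination -h₁ - h₂
  exact absurd this (by decide)

lemma lift_eq_mk2_of_occurs_eq_univ {F : Type*} [Field F] (hw : occurs w = univ.val)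
    (v : α → GoodAlg F) :
    FreeMagma.lift v w =
      mk2 ((∏ i ∈ evenLeaves w, uc (v i)) * ∏ i ∈ univ \ evenLeaves w, vc (v i))
        ((∏ i ∈ evenLeaves w, vc (v i)) * ∏ i ∈ univ \ evenLeaves w, uc (v i)) := by
  rw [lift_eq_mk2, prod_eq_multiset_prod, prod_eq_multiset_prod, prod_eq_multiset_prod,
    prod_eq_multiset_prod, val_evenLeaves hw, val_sdiff_evenLeaves hw]
  rfl

end EvenLeaves

section SubsetProdSum

variable {ι R S : Type*} [DecidableEq ι] [CommSemiring R] [CommSemiring S]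

def subsetProdSum (s : Finset ι) (d : Finset ι → R) (a b : ι → R) : R :=
  ∑ T ∈ s.powerset, d T * ((∏ i ∈ T, a i) * ∏ i ∈ s \ T, b i)

lemma subsetProdSum_insert {j : ι} {s : Finset ι} (hj : j ∉ s) (d : Finset ι → R)
    (a b : ι → R) :
    subsetProdSum (insert j s) d a b =
      b j * subsetProdSum s d a b + a j * subsetProdSum s (fun T => d (insert j T)) a b := by
  rw [subsetProdSum, sum_powerset_insert hj, subsetProdSum, subsetProdSum, mul_sum, mul_sum]
  congr 1 <;> refine sum_congr rfl fun T hT => ?_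
  · have hjT : j ∉ s \ T := fun h => hj (mem_sdiff.1 h).1
    rw [insert_sdiff_of_notMem _ (fun h => hj (mem_powerset.1 hT h)), prod_insert hjT]
    ring
  · have hjT : j ∉ T := fun h => hj (mem_powerset.1 hT h)
    rw [insert_sdiff_insert, sdiff_insert_of_notMem hj, prod_insert hjT]
    ring

lemma subsetProdSum_congr {s : Finset ι} {a a' b b' : ι → R} (ha : ∀ i ∈ s, a i = a' i)
    (hb : ∀ i ∈ s, b i = b' i) (d : Finset ι → R) :
    subsetProdSum s d a b = subsetProdSum s d a' b' := by
  refine sum_congr rfl fun T hT => ?_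
  rw [prod_congr rfl fun i hi => ha i (mem_powerset.1 hT hi),
    prod_congr rfl fun i hi => hb i (mem_sdiff.1 hi).1]

lemma subsetProdSum_update {j : ι} {s : Finset ι} (hj : j ∉ s) (d : Finset ι → R)
    (x y : ι → R) (σ τ : R) :
    subsetProdSum (insert j s) d (Function.update x j σ) (Function.update y j τ) =
      τ * subsetProdSum s d x y + σ * subsetProdSum s (fun T => d (insert j T)) x y := by
  have hne : ∀ i ∈ s, i ≠ j := fun i hi h => hj (h ▸ hi)
  have hupd : ∀ d' : Finset ι → R, subsetProdSum s d' (Function.update x j σ)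
      (Function.update y j τ) = subsetProdSum s d' x y :=
    subsetProdSum_congr (fun i hi => Function.update_of_ne (hne i hi) _ _)
      (fun i hi => Function.update_of_ne (hne i hi) _ _)
  rw [subsetProdSum_insert hj, Function.update_self, Function.update_self, hupd, hupd]

lemma subsetProdSum_swap (s : Finset ι) (d : Finset ι → R) (a b : ι → R) :
    subsetProdSum s d b a = subsetProdSum s (fun T => d (s \ T)) a b := by
  refine sum_nbij' (s \ ·) (s \ ·) (fun T _ => by simp) (fun T _ => by simp)
    (fun T hT => Finset.sdiff_sdiff_eq_self (mem_powerset.1 hT))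
    (fun T hT => Finset.sdiff_sdiff_eq_self (mem_powerset.1 hT)) fun T hT => ?_
  simp only [Finset.sdiff_sdiff_eq_self (mem_powerset.1 hT), mul_comm (∏ i ∈ T, b i)]

lemma map_subsetProdSum (f : R →+* S) (s : Finset ι) (d : Finset ι → R) (a b : ι → R) :
    f (subsetProdSum s d a b) = subsetProdSum s (f ∘ d) (f ∘ a) (f ∘ b) := by
  simp [subsetProdSum, map_sum, map_prod]

end SubsetProdSum

lemma Finset.sum_single_one_injective {ι : Type*} :
    Function.Injective fun T : Finset ι => ∑ i ∈ T, Finsupp.single i 1 := by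
  intro T T' h
  have := congrArg Finsupp.toMultiset h
  simp only [Finsupp.toMultiset_sum_single, one_nsmul] at this
  exact Finset.val_injective this

lemma exists_mul_add_mul_eq_of_det_ne_zero {K : Type*} [Field K] {a b c d : K}
    (h : a * d - b * c ≠ 0) (z₁ z₂ : K) :
    ∃ σ τ, σ * a + τ * b = z₁ ∧ σ * c + τ * d = z₂ :=
  ⟨(z₁ * d - z₂ * b) / (a * d - b * c), (z₂ * a - z₁ * c) / (a * d - b * c),
    by rw [div_mul_eq_mul_div, div_mul_eq_mul_div, ← add_div, div_eq_iff h]; ring,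
    by rw [div_mul_eq_mul_div, div_mul_eq_mul_div, ← add_div, div_eq_iff h]; ring⟩

namespace MvPolynomial

lemma degreeOf_le_of_dvd {σ R : Type*} [CommSemiring R] [NoZeroDivisors R]
    {u f : MvPolynomial σ R} (h : u ∣ f) (hf : f ≠ 0) (i : σ) :
    degreeOf i u ≤ degreeOf i f := by
  obtain ⟨g, rfl⟩ := h
  rw [degreeOf_mul_eq (left_ne_zero_of_mul hf) (right_ne_zero_of_mul hf)]
  exact Nat.le_add_right _ _

section MultilinearPoly

variable {ι R : Type*} [DecidableEq ι] [CommSemiring R]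

noncomputable def multilinearPoly (s : Finset ι) (d : Finset ι → R) : MvPolynomial ι R :=
  subsetProdSum s (C ∘ d) X 1

lemma eval_multilinearPoly (x : ι → R) (s : Finset ι) (d : Finset ι → R) :
    eval x (multilinearPoly s d) = subsetProdSum s d x 1 := by
  rw [multilinearPoly, map_subsetProdSum]
  congr 1 <;> ext <;> simp

lemma multilinearPoly_insert {j : ι} {s : Finset ι} (hj : j ∉ s) (d : Finset ι → R) :
    multilinearPoly (insert j s) d =
      multilinearPoly s d + X j * multilinearPoly s (fun T => d (insert j T)) := by
  rw [multilinearPoly, subsetProdSum_insert hj, Pi.one_apply, one_mul]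
  rfl

lemma multilinearPoly_eq_sum_monomial (s : Finset ι) (d : Finset ι → R) :
    multilinearPoly s d =
      ∑ T ∈ s.powerset, monomial (∑ i ∈ T, Finsupp.single i 1) (d T) := by
  refine sum_congr rfl fun T _ => ?_
  simp [monomial_sum_index, X]

lemma coeff_multilinearPoly {s T : Finset ι} (hT : T ⊆ s) (d : Finset ι → R) :
    coeff (∑ i ∈ T, Finsupp.single i 1) (multilinearPoly s d) = d T := by
  rw [multilinearPoly_eq_sum_monomial, coeff_sum, sum_eq_single_of_mem T (mem_powerset.2 hT)]
  · rw [coeff_monomial, if_pos rfl]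
  · intro T' _ hT'
    rw [coeff_monomial, if_neg (sum_single_one_injective.ne hT')]

lemma degreeOf_multilinearPoly_le (i : ι) (s : Finset ι) (d : Finset ι → R) :
    degreeOf i (multilinearPoly s d) ≤ if i ∈ s then 1 else 0 := by
  rw [multilinearPoly_eq_sum_monomial, degreeOf_le_iff]
  intro m hm
  obtain ⟨T, hT, hmT⟩ := mem_biUnion.1 (support_sum hm)
  rw [mem_singleton.1 (support_monomial_subset hmT), Finsupp.finsetSum_apply]
  simp only [Finsupp.single_apply, sum_ite_eq']
  split_ifs with h₁ h₂ <;> first | omega | exact absurd (mem_powerset.1 hT h₁) h₂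

end MultilinearPoly

section SlopeIntercept

variable {ι R : Type*} [Fintype ι] [DecidableEq ι]

section CommSemiring

variable [CommSemiring R]

noncomputable def slopeIn (j : ι) (d : Finset ι → R) : MvPolynomial ι R :=
  multilinearPoly (univ.erase j) fun T => d (insert j T)

noncomputable def interceptIn (j : ι) (d : Finset ι → R) : MvPolynomial ι R :=
  multilinearPoly (univ.erase j) d

lemma interceptIn_add_X_mul_slopeIn (j : ι) (d : Finset ι → R) :
    interceptIn j d + X j * slopeIn j d = multilinearPoly univ d := by
  rw [← insert_erase (mem_univ j), multilinearPoly_insert (notMem_erase j _)]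
  rfl

lemma subsetProdSum_univ_update (j : ι) (d : Finset ι → R) (x : ι → R) (σ τ : R) :
    subsetProdSum univ d (Function.update x j σ) (Function.update 1 j τ) =
      σ * eval x (slopeIn j d) + τ * eval x (interceptIn j d) := by
  rw [← insert_erase (mem_univ j), subsetProdSum_update (notMem_erase j _), interceptIn, slopeIn,
    eval_multilinearPoly, eval_multilinearPoly, add_comm]

lemma degreeOf_slopeIn_le_one (i j : ι) (d : Finset ι → R) : degreeOf i (slopeIn j d) ≤ 1 :=
  (degreeOf_multilinearPoly_le i _ _).trans (by split_ifs <;> omega)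

lemma degreeOf_interceptIn_le_one (i j : ι) (d : Finset ι → R) :
    degreeOf i (interceptIn j d) ≤ 1 :=
  (degreeOf_multilinearPoly_le i _ _).trans (by split_ifs <;> omega)

lemma degreeOf_slopeIn_self (j : ι) (d : Finset ι → R) : degreeOf j (slopeIn j d) = 0 := by
  simpa [slopeIn] using degreeOf_multilinearPoly_le j (univ.erase j) _

lemma degreeOf_interceptIn_self (j : ι) (d : Finset ι → R) :
    degreeOf j (interceptIn j d) = 0 := by
  simpa [interceptIn] using degreeOf_multilinearPoly_le j (univ.erase j) d

end CommSemiring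

/-- The determinant of `(σ, τ) ↦ (subsetProdSum univ c a b, subsetProdSum univ c b a)` at
`a = update x j σ`, `b = update 1 j τ`, as a polynomial in `x` (see `subsetProdSum_univ_update`
and `subsetProdSum_swap`). -/
noncomputable def jacobianIn [CommRing R] (j : ι) (c : Finset ι → R) : MvPolynomial ι R :=
  slopeIn j c * interceptIn j (fun T => c (univ \ T)) -
    interceptIn j c * slopeIn j (fun T => c (univ \ T))

lemma degreeOf_jacobianIn_le [CommRing R] (i j : ι) (c : Finset ι → R) :
    degreeOf i (jacobianIn j c) ≤ 2 :=
  (degreeOf_sub_le i _ _).trans <| max_le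
    ((degreeOf_mul_le i _ _).trans
      (add_le_add (degreeOf_slopeIn_le_one i j c) (degreeOf_interceptIn_le_one i j _)))
    ((degreeOf_mul_le i _ _).trans
      (add_le_add (degreeOf_interceptIn_le_one i j c) (degreeOf_slopeIn_le_one i j _)))

end SlopeIntercept

section Field

variable {ι F : Type*} [Fintype ι] [DecidableEq ι] [Field F]

lemma multilinearPoly_univ_ne_zero {d : Finset ι → F} (hd : d ≠ 0) :
    multilinearPoly univ d ≠ 0 := by
  obtain ⟨T, hT⟩ := Function.ne_iff.1 hd
  intro h
  exact hT (by rw [← coeff_multilinearPoly (subset_univ T) d, h, coeff_zero, Pi.zero_apply])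

lemma exists_eq_C_of_dvd_slopeIn_interceptIn {d : Finset ι → F} (hd : d ≠ 0)
    {u : MvPolynomial ι F} (hu : ∀ j, u ∣ slopeIn j d ∧ u ∣ interceptIn j d) :
    ∃ α, u = C α := by
  refine ⟨coeff 0 u, vars_eq_empty_iff_eq_C.1 (eq_empty_of_forall_notMem fun j hj => ?_)⟩
  rw [mem_vars_iff_degreeOf_ne_zero] at hj
  by_cases hs : slopeIn j d = 0
  · have hi : interceptIn j d ≠ 0 := fun hi => multilinearPoly_univ_ne_zero hd
      (by rw [← interceptIn_add_X_mul_slopeIn j, hs, hi, mul_zero, add_zero])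
    exact hj (Nat.le_zero.1 ((degreeOf_le_of_dvd (hu j).2 hi j).trans_eq
      (degreeOf_interceptIn_self j d)))
  · exact hj (Nat.le_zero.1 ((degreeOf_le_of_dvd (hu j).1 hs j).trans_eq
      (degreeOf_slopeIn_self j d)))

lemma dvd_slopeIn_and_dvd_interceptIn {c c' : Finset ι → F} {g u u' : MvPolynomial ι F}
    (hg : g ≠ 0) (hu : g * u = multilinearPoly univ c) (hu' : g * u' = multilinearPoly univ c')
    (hrel : IsRelPrime u u') {j : ι}
    (hdet : slopeIn j c * interceptIn j c' = interceptIn j c * slopeIn j c') :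
    u ∣ slopeIn j c ∧ u ∣ interceptIn j c := by
  have hq := interceptIn_add_X_mul_slopeIn j c
  have hq' := interceptIn_add_X_mul_slopeIn j c'
  rw [← hu] at hq
  rw [← hu'] at hq'
  have hs : slopeIn j c * u' = slopeIn j c' * u := mul_left_cancel₀ hg (by
    linear_combination slopeIn j c' * hq - slopeIn j c * hq' + hdet)
  have hi : interceptIn j c * u' = interceptIn j c' * u := mul_left_cancel₀ hg (by
    linear_combination interceptIn j c' * hq - interceptIn j c * hq' - X j * hdet)
  constructor
  · exact hrel.dvd_of_dvd_mul_right (by rw [hs]; exact dvd_mul_left u _)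
  · exact hrel.dvd_of_dvd_mul_right (by rw [hi]; exact dvd_mul_left u _)

theorem exists_jacobianIn_ne_zero {c : Finset ι → F} (hc : c ≠ 0)
    (hcompl : ∀ T, c T = 0 ∨ c (univ \ T) = 0) : ∃ j, jacobianIn j c ≠ 0 := by
  set c' : Finset ι → F := fun T => c (univ \ T)
  obtain ⟨T, hT⟩ : ∃ T, c T ≠ 0 := Function.ne_iff.1 hc
  have hc' : c' ≠ 0 := Function.ne_iff.2 ⟨univ \ T, by simpa [c'] using hT⟩
  by_contra! hdet
  simp only [jacobianIn, sub_eq_zero] at hdet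
  obtain ⟨u, u', g, hrel, hu, hu'⟩ := UniqueFactorizationMonoid.exists_reduced_factors _
    (multilinearPoly_univ_ne_zero hc) (multilinearPoly univ c')
  have hg : g ≠ 0 := left_ne_zero_of_mul (hu ▸ multilinearPoly_univ_ne_zero hc)
  obtain ⟨α, rfl⟩ := exists_eq_C_of_dvd_slopeIn_interceptIn hc fun j =>
    dvd_slopeIn_and_dvd_interceptIn hg hu hu' hrel (hdet j)
  obtain ⟨β, rfl⟩ := exists_eq_C_of_dvd_slopeIn_interceptIn hc' fun j =>
    dvd_slopeIn_and_dvd_interceptIn hg hu' hu hrel.symm (by linear_combination -hdet j)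
  have hα : α ≠ 0 := by
    rintro rfl
    exact multilinearPoly_univ_ne_zero hc (by rw [← hu, C_0, mul_zero])
  have hprop : C β * multilinearPoly univ c = C α * multilinearPoly univ c' := by
    rw [← hu, ← hu']
    ring
  have hcoeff := congrArg (coeff (∑ i ∈ univ \ T, Finsupp.single i 1)) hprop
  rw [coeff_C_mul, coeff_C_mul, coeff_multilinearPoly (subset_univ _),
    coeff_multilinearPoly (subset_univ _)] at hcoeff
  simp only [c', Finset.sdiff_sdiff_eq_self (subset_univ T)] at hcoeff
  rcases hcompl T with h | h
  · exact hT h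
  · exact mul_ne_zero hα hT (by rw [← hcoeff, h, mul_zero])

end Field

end MvPolynomial

open MvPolynomial in
theorem exists_subsetProdSum_eq {ι F : Type*} [Fintype ι] [DecidableEq ι] [Field F]
    {S : Finset F} (hS : 3 ≤ #S) {c : Finset ι → F} (hc : c ≠ 0)
    (hcompl : ∀ T, c T = 0 ∨ c (univ \ T) = 0) (z₁ z₂ : F) :
    ∃ a b : ι → F, subsetProdSum univ c a b = z₁ ∧ subsetProdSum univ c b a = z₂ := by
  obtain ⟨j, hdet⟩ := exists_jacobianIn_ne_zero hc hcompl
  obtain ⟨x, hx⟩ : ∃ x, eval x (jacobianIn j c) ≠ 0 := by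
    by_contra! h
    exact hdet (eq_zero_of_eval_zero_at_prod_finset _ (fun _ => S)
      (fun i => (degreeOf_jacobianIn_le i j c).trans_lt hS) fun x _ => h x)
  rw [jacobianIn, map_sub, map_mul, map_mul] at hx
  obtain ⟨σ, τ, h₁, h₂⟩ := exists_mul_add_mul_eq_of_det_ne_zero hx z₁ z₂
  refine ⟨Function.update x j σ, Function.update 1 j τ, ?_, ?_⟩
  · rw [subsetProdSum_univ_update, h₁]
  · rw [subsetProdSum_swap, subsetProdSum_univ_update, h₂]

section EvalPoly

open GoodAlg

variable {F : Type*} [Field F] {m : ℕ}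

def evenLeavesCoeff (p : FreeMagma (Fin m) →₀ F) (T : Finset (Fin m)) : F :=
  ∑ w ∈ p.support with evenLeaves w = T, p w

lemma sum_support_eq_subsetProdSum (p : FreeMagma (Fin m) →₀ F) (a b : Fin m → F) :
    ∑ w ∈ p.support,
        p w * ((∏ i ∈ evenLeaves w, a i) * ∏ i ∈ univ \ evenLeaves w, b i) =
      subsetProdSum univ (evenLeavesCoeff p) a b := by
  rw [subsetProdSum, powerset_univ, ← sum_fiberwise p.support evenLeaves]
  refine sum_congr rfl fun T _ => ?_
  rw [evenLeavesCoeff, sum_mul]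
  exact sum_congr rfl fun w hw => by rw [(mem_filter.1 hw).2]

variable {p : FreeMagma (Fin m) →₀ F}

lemma evalPoly_eq_mk2 (hp : IsMultilinear p) (v : Fin m → GoodAlg F) :
    evalPoly p v = mk2 (subsetProdSum univ (evenLeavesCoeff p) (uc ∘ v) (vc ∘ v))
      (subsetProdSum univ (evenLeavesCoeff p) (vc ∘ v) (uc ∘ v)) := by
  refine GoodAlg.ext ?_ ?_
  · rw [uc_mk2, ← sum_support_eq_subsetProdSum, evalPoly, Finsupp.sum, uc_sum]
    refine sum_congr rfl fun w hw => ?_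
    rw [uc_smul, lift_eq_mk2_of_occurs_eq_univ (hp w hw), uc_mk2]
    rfl
  · rw [vc_mk2, ← sum_support_eq_subsetProdSum, evalPoly, Finsupp.sum, vc_sum]
    refine sum_congr rfl fun w hw => ?_
    rw [vc_smul, lift_eq_mk2_of_occurs_eq_univ (hp w hw), vc_mk2]
    rfl

lemma evenLeavesCoeff_eq_zero_or (hp : IsMultilinear p) (T : Finset (Fin m)) :
    evenLeavesCoeff p T = 0 ∨ evenLeavesCoeff p (univ \ T) = 0 := by
  by_contra! h
  obtain ⟨w₁, hw₁, -⟩ := exists_ne_zero_of_sum_ne_zero h.1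
  obtain ⟨w₂, hw₂, -⟩ := exists_ne_zero_of_sum_ne_zero h.2
  rw [mem_filter] at hw₁ hw₂
  exact evenLeaves_ne_sdiff (hp w₂ hw₂.1) (hp w₁ hw₁.1) (by rw [hw₂.2, hw₁.2])

end EvalPoly

lemma card_zero_one_eq_three {F : Type*} [Field F] [DecidableEq F] (h3 : (3 : F) ≠ 0) {ω : F}
    (hω : ω ^ 2 + ω + 1 = 0) : #({0, 1, ω} : Finset F) = 3 := by
  refine card_eq_three.2 ⟨0, 1, ω, zero_ne_one, fun h => ?_, fun h => h3 ?_, rfl⟩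
  · rw [← h] at hω
    norm_num at hω
  · rw [← h] at hω
    linear_combination hω

open GoodAlg in
/-- If `char F ≠ 3` and `F` contains a root of `ω² + ω + 1`, the image of any multilinear
non-associative polynomial on `𝔐₀` is `{0}` or all of `𝔐₀`. -/
theorem multilinear_image_on_M0 {F : Type*} [Field F] (h3 : (3 : F) ≠ 0)
    (ω : F) (hω : ω ^ 2 + ω + 1 = 0) {m : ℕ}
    (p : FreeMagma (Fin m) →₀ F) (hml : IsMultilinear p) :
    Set.range (fun v : Fin m → GoodAlg F => evalPoly p v) = {0} ∨
      Set.range (fun v : Fin m → GoodAlg F => evalPoly p v) = Set.univ := by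
  classical
  by_cases hc : evenLeavesCoeff p = 0
  · left
    have hzero : (fun v : Fin m → GoodAlg F => evalPoly p v) = fun _ => 0 := by
      funext v
      simp [evalPoly_eq_mk2 hml, hc, subsetProdSum]
    rw [hzero, Set.range_const]
  · right
    refine Set.eq_univ_of_forall fun z => ?_
    obtain ⟨a, b, h₁, h₂⟩ := exists_subsetProdSum_eq (card_zero_one_eq_three h3 hω).ge hc
      (evenLeavesCoeff_eq_zero_or hml) (uc z) (vc z)
    exact ⟨fun i => mk2 (a i) (b i), (evalPoly_eq_mk2 hml _).trans (GoodAlg.ext h₁ h₂)⟩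
end
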